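/- The Schubert polynomials satisfy the Nadeau-Spink-Tewari recursion: for every permutation w, 𝔖_w = R_1(𝔖_w) + Σ_{k ∈ Des(w)} x_k · R_{k+1}(𝔖_{w s_k}), where Des(w) = {k : w(k) > w(k+1)} and R_k are the Bergeron-Sottile operators. -/

import Mathlib

/-!
Since `R_{k+1}` kills `x_{k+1}`, fixes `x_k` and satisfies `R_{k+1} ∘ s_k = R_k`, applying it to
`𝔖_w - s_k 𝔖_w = (x_k - x_{k+1}) 𝔖_{w s_k}` shows that the `k`-th summand equals
`R_{k+1} 𝔖_w - R_k 𝔖_w` at a descent; at an ascent `𝔖_w` is `s_k`-symmetric and this difference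
vanishes. The sum therefore telescopes to `R_{n+1} 𝔖_w - R_1 𝔖_w`, and `R_{n+1} 𝔖_w = 𝔖_w`
because `𝔖_w` only involves `x_1, …, x_n`. The latter is proved by climbing from `w` to `w₀`
along ascents, each step decreasing the weight `∑ i · w(i)`, and cancelling `x_k - x_{k+1}`.
-/

open MvPolynomial

/-- The Bergeron–Sottile operator `R_k` on the polynomial ring `ℤ[x_1, x_2, …]`. -/
noncomputable def Rop (k : ℕ+) : MvPolynomial ℕ+ ℤ →ₐ[ℤ] MvPolynomial ℕ+ ℤ :=
  aeval fun i => if i < k then X i else if i = k then 0 else X (i - 1)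

open Finset Equiv

lemma PNat.exists_eq_add_one_of_lt {k i : ℕ+} (h : k < i) : ∃ j, k ≤ j ∧ i = j + 1 := by
  obtain ⟨j, rfl⟩ := PNat.exists_eq_succ_of_ne_one (one_lt_of_gt h).ne'
  exact ⟨j, PNat.lt_add_one_iff.mp h, rfl⟩

lemma PNat.sum_Icc_one_sub {M : Type*} [AddCommGroup M] (G : ℕ+ → M) (n : ℕ+) :
    ∑ k ∈ Icc 1 n, (G (k + 1) - G k) = G (n + 1) - G 1 := by
  induction n using PNat.recOn with
  | one => simp
  | succ n ih =>
    rw [← insert_Icc_right_eq_Icc_add_one (by simp), sum_insert (by simp), ih]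
    abel

lemma PNat.add_le_add_of_descents {n : ℕ+} {f : ℕ+ → ℕ+}
    (hf : ∀ k, k + 1 ≤ n → f (k + 1) < f k) {i j : ℕ+} (hij : i ≤ j) (hjn : j ≤ n) :
    (f j : ℕ) + j ≤ f i + i := by
  induction j using PNat.recOn with
  | one => rw [le_one_iff_eq_one.mp hij]
  | succ j ih =>
    obtain rfl | hij := hij.eq_or_lt
    · exact le_rfl
    have hprev := ih (PNat.lt_add_one_iff.mp hij) ((PNat.lt_add_right j 1).le.trans hjn)
    have hstep := PNat.coe_lt_coe _ _ |>.mpr (hf j hjn)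
    push_cast
    omega

lemma Equiv.swap_add_one_apply_of_lt {k i : ℕ+} (h : i < k) : swap k (k + 1) i = i :=
  swap_apply_of_ne_of_ne h.ne (h.trans (PNat.lt_add_right k 1)).ne

lemma Equiv.swap_add_one_apply_of_add_one_lt {k i : ℕ+} (h : k + 1 < i) :
    swap k (k + 1) i = i :=
  swap_apply_of_ne_of_ne ((PNat.lt_add_right k 1).trans h).ne' h.ne'

namespace Equiv.Perm

def weight (n : ℕ+) (w : Perm ℕ+) : ℕ := ∑ i ∈ Icc 1 n, (i : ℕ) * w i

lemma weight_mul_swap_lt {n k : ℕ+} (w : Perm ℕ+) (hk : k + 1 ≤ n)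
    (hasc : w k < w (k + 1)) : (w * swap k (k + 1)).weight n < w.weight n := by
  set s := swap k (k + 1)
  have hkk : k < k + 1 := PNat.lt_add_right k 1
  have hsupp : {a | s a ≠ a} ⊆ Icc 1 n := by
    intro a ha
    obtain ⟨-, rfl | rfl⟩ := swap_apply_ne_self_iff.mp ha
    all_goals simp only [coe_Icc, Set.mem_Icc, one_le, true_and]; order
  have hreindex : (w * s).weight n = ∑ i ∈ Icc 1 n, (s i : ℕ) * w i := by
    simpa [weight, s, swap_inv] using s.sum_comp' (Icc 1 n) (fun a b => (b : ℕ) * w a) hsupp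
  have hdiff : ∑ i ∈ Icc 1 n, (((i : ℕ) : ℤ) - (s i : ℕ)) * (w i : ℕ)
      = (w (k + 1) : ℕ) - (w k : ℕ) := by
    rw [sum_eq_add_of_mem k (k + 1) (hsupp (swap_apply_ne_self_iff.mpr ⟨hkk.ne, .inl rfl⟩))
      (hsupp (swap_apply_ne_self_iff.mpr ⟨hkk.ne, .inr rfl⟩)) hkk.ne]
    · rw [swap_apply_left, swap_apply_right]
      push_cast
      ring
    · rintro c - ⟨hck, hck1⟩
      simp [s, swap_apply_of_ne_of_ne hck hck1]
  suffices ((w * s).weight n : ℤ) < w.weight n by exact_mod_cast this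
  rw [hreindex, weight, ← sub_pos]
  push_cast
  rw [← sum_sub_distrib]
  simp_rw [← sub_mul]
  rw [hdiff, sub_pos]
  exact_mod_cast hasc

lemma apply_add_eq_of_descents {n : ℕ+} {w : Perm ℕ+}
    (hw : ∀ i, n < i → w i = i) (hdesc : ∀ k, k + 1 ≤ n → w (k + 1) < w k)
    {i : ℕ+} (hi : i ≤ n) : (w i : ℕ) + i = n + 1 := by
  have hw1 : w 1 ≤ n := by
    by_contra! h
    have hfix := w.injective (hw _ h)
    exact not_lt_of_ge (one_le : 1 ≤ n) (hfix ▸ h)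
  have hupper := PNat.add_le_add_of_descents hdesc one_le hi
  have hlower := PNat.add_le_add_of_descents hdesc hi le_rfl
  have hw1' := PNat.coe_le_coe _ _ |>.mpr hw1
  have hwn := (w n).pos
  push_cast at hupper
  omega

end Equiv.Perm

namespace MvPolynomial

lemma rename_swap_rename_swap {σ R : Type*} [CommSemiring R] [DecidableEq σ]
    (i j : σ) (p : MvPolynomial σ R) : rename (swap i j) (rename (swap i j) p) = p := by
  rw [rename_rename, ← Perm.coe_mul, swap_mul_self, Perm.coe_one, rename_id_apply]

lemma rename_swap_eq_of_sub_rename_swap_eq_mul {σ R : Type*} [CommRing R]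
    [IsDomain R] [DecidableEq σ] {i j : σ} (hij : i ≠ j) {f g : MvPolynomial σ R}
    (h : f - rename (swap i j) f = (X i - X j) * g) : rename (swap i j) g = g := by
  have h' := congrArg (rename (swap i j)) h
  simp only [map_sub, map_mul, rename_X, swap_apply_left, swap_apply_right,
    rename_swap_rename_swap] at h'
  have hprod : (X i - X j) * (g - rename (swap i j) g) = 0 := by linear_combination -h - h'
  exact (sub_eq_zero.mp ((mul_eq_zero.mp hprod).resolve_left
    (sub_ne_zero.mpr (X_injective.ne hij)))).symm

end MvPolynomial

namespace Rop

lemma X_of_lt {k i : ℕ+} (h : i < k) : Rop k (X i) = X i := by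
  simp [Rop, h]

lemma X_self (k : ℕ+) : Rop k (X k) = 0 := by
  simp [Rop]

lemma X_add_one {k j : ℕ+} (h : k ≤ j) : Rop k (X (j + 1)) = X j := by
  simp [Rop, (PNat.lt_add_one_iff.mpr h).not_gt, (PNat.lt_add_one_iff.mpr h).ne', PNat.add_sub]

lemma add_one_comp_rename_swap (k : ℕ+) :
    (Rop (k + 1)).comp (rename (swap k (k + 1))) = Rop k := by
  refine algHom_ext fun i => ?_
  simp only [AlgHom.comp_apply, rename_X]
  obtain h | rfl | h := lt_trichotomy i k
  · rw [swap_add_one_apply_of_lt h, X_of_lt h, X_of_lt (h.trans (PNat.lt_add_right k 1))]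
  · rw [swap_apply_left, X_self, X_self]
  obtain ⟨j, hkj, rfl⟩ := PNat.exists_eq_add_one_of_lt h
  obtain rfl | hkj := hkj.eq_or_lt
  · rw [swap_apply_right, X_of_lt (PNat.lt_add_right k 1), X_add_one le_rfl]
  · rw [swap_add_one_apply_of_add_one_lt (add_lt_add_left hkj 1),
      X_add_one (PNat.add_one_le_iff.mpr hkj), X_add_one hkj.le]

lemma add_one_comp_rename_swap_comm {k m : ℕ+} (hkm : k + 1 ≤ m) :
    (Rop (m + 1)).comp (rename (swap k (k + 1)))
      = (rename (swap k (k + 1))).comp (Rop (m + 1)) := by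
  refine algHom_ext fun i => ?_
  simp only [AlgHom.comp_apply, rename_X]
  obtain h | rfl | h := lt_trichotomy i (m + 1)
  · have hs : swap k (k + 1) i < m + 1 := by
      rw [swap_apply_def]
      rw [PNat.lt_add_one_iff] at h ⊢
      have := PNat.lt_add_right k 1
      split_ifs <;> order
    rw [X_of_lt h, X_of_lt hs, rename_X]
  · rw [swap_add_one_apply_of_add_one_lt (add_lt_add_left (PNat.add_one_le_iff.mp hkm) 1),
      X_self, map_zero]
  obtain ⟨j, hmj, rfl⟩ := PNat.exists_eq_add_one_of_lt h
  have hkj : k + 1 < j := hkm.trans_lt (PNat.add_one_le_iff.mp hmj)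
  rw [swap_add_one_apply_of_add_one_lt (hkj.trans (PNat.lt_add_right j 1)), X_add_one hmj,
    rename_X, swap_add_one_apply_of_add_one_lt hkj]

end Rop

def SatisfiesDividedDifference (S : Perm ℕ+ → MvPolynomial ℕ+ ℤ) : Prop :=
  ∀ (w : Perm ℕ+) (k : ℕ+), w (k + 1) < w k →
    S w - rename (swap k (k + 1)) (S w) = (X k - X (k + 1)) * S (w * swap k (k + 1))

namespace SatisfiesDividedDifference

variable {S : Perm ℕ+ → MvPolynomial ℕ+ ℤ}

lemma rename_swap_of_lt (hdd : SatisfiesDividedDifference S) {w : Perm ℕ+} {k : ℕ+}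
    (hasc : w k < w (k + 1)) : rename (swap k (k + 1)) (S w) = S w := by
  refine rename_swap_eq_of_sub_rename_swap_eq_mul (f := S (w * swap k (k + 1)))
    (PNat.lt_add_right k 1).ne ?_
  simpa [mul_swap_mul_self] using hdd (w * swap k (k + 1)) k (by simpa using hasc)

lemma X_mul_Rop_of_gt (hdd : SatisfiesDividedDifference S) {w : Perm ℕ+} {k : ℕ+}
    (hdesc : w (k + 1) < w k) :
    X k * Rop (k + 1) (S (w * swap k (k + 1))) = Rop (k + 1) (S w) - Rop k (S w) := by
  have h := congrArg (Rop (k + 1)) (hdd w k hdesc)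
  rw [map_sub, map_mul, map_sub, Rop.X_of_lt (PNat.lt_add_right k 1), Rop.X_self, sub_zero,
    ← AlgHom.comp_apply, Rop.add_one_comp_rename_swap] at h
  exact h.symm

lemma ite_eq_Rop_sub (hdd : SatisfiesDividedDifference S) (w : Perm ℕ+) (k : ℕ+) :
    (if w (k + 1) < w k then X k * Rop (k + 1) (S (w * swap k (k + 1))) else 0)
      = Rop (k + 1) (S w) - Rop k (S w) := by
  split_ifs with hdesc
  · exact hdd.X_mul_Rop_of_gt hdesc
  · have hasc : w k < w (k + 1) :=
      (not_lt.mp hdesc).lt_of_ne (w.injective.ne (PNat.lt_add_right k 1).ne)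
    rw [← Rop.add_one_comp_rename_swap k, AlgHom.comp_apply, hdd.rename_swap_of_lt hasc,
      sub_self]

lemma Rop_eq_self (hdd : SatisfiesDividedDifference S)
    (hbase : ∀ (n : ℕ+) (w : Perm ℕ+), (∀ i : ℕ+, i ≤ n → ((w i : ℕ) + (i : ℕ) = (n : ℕ) + 1)) →
      (∀ i : ℕ+, n < i → w i = i) → S w = ∏ i ∈ Icc (1 : ℕ+) n, X i ^ ((n : ℕ) - (i : ℕ)))
    {n m : ℕ+} (hnm : n ≤ m) {w : Perm ℕ+} (hw : ∀ i, n < i → w i = i) :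
    Rop (m + 1) (S w) = S w := by
  induction hweight : w.weight n using Nat.strong_induction_on generalizing w with
  | _ N ih =>
  by_cases hasc : ∃ k, k + 1 ≤ n ∧ w k < w (k + 1)
  · obtain ⟨k, hkn, hasc⟩ := hasc
    set w' := w * swap k (k + 1)
    have hw' : ∀ i, n < i → w' i = i := by
      intro i hi
      rw [Perm.mul_apply, swap_add_one_apply_of_add_one_lt (hkn.trans_lt hi), hw i hi]
    have hRw' := ih _ (hweight ▸ w.weight_mul_swap_lt hkn hasc) hw' rfl
    have hdd' := hdd w' k (by simpa [w'] using hasc)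
    rw [mul_swap_mul_self] at hdd'
    have hkm : k + 1 < m + 1 := hkn.trans_lt (PNat.lt_add_one_iff.mpr hnm)
    have h := congrArg (Rop (m + 1)) hdd'
    rw [map_sub, map_mul, map_sub, ← AlgHom.comp_apply,
      Rop.add_one_comp_rename_swap_comm (hkn.trans hnm), AlgHom.comp_apply, hRw', hdd',
      Rop.X_of_lt hkm, Rop.X_of_lt ((PNat.lt_add_right k 1).trans hkm)] at h
    exact mul_left_cancel₀ (sub_ne_zero.mpr (X_injective.ne (PNat.lt_add_right k 1).ne)) h.symm
  · push Not at hasc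
    have hdesc : ∀ k, k + 1 ≤ n → w (k + 1) < w k := fun k hk =>
      (hasc k hk).lt_of_ne (w.injective.ne (PNat.lt_add_right k 1).ne')
    rw [hbase n w (fun i hi => w.apply_add_eq_of_descents hw hdesc hi) hw, map_prod]
    refine prod_congr rfl fun i hi => ?_
    rw [map_pow, Rop.X_of_lt (PNat.lt_add_one_iff.mpr ((mem_Icc.mp hi).2.trans hnm))]

end SatisfiesDividedDifference

/-- The Nadeau–Spink–Tewari recursion for Schubert polynomials:
if `𝔖` is the family of Schubert polynomials, characterized by
`𝔖_{w₀} = x_1^{n-1} x_2^{n-2} ⋯ x_{n-1}` for the longest element `w₀ ∈ S_n` and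
`∂_k 𝔖_w = 𝔖_{w s_k}` whenever `w(k) > w(k+1)` (stated via
`𝔖_w - s_k 𝔖_w = (x_k - x_{k+1})·𝔖_{w s_k}`), then for every permutation `w`
(lying in `S_n`, i.e. fixing all `i > n`),
`𝔖_w = R_1(𝔖_w) + Σ_{k ∈ Des(w)} x_k · R_{k+1}(𝔖_{w s_k})`. -/
theorem stmt12 (S : Equiv.Perm ℕ+ → MvPolynomial ℕ+ ℤ)
    (hbase : ∀ (n : ℕ+) (w : Equiv.Perm ℕ+),
      (∀ i : ℕ+, i ≤ n → ((w i : ℕ) + (i : ℕ) = (n : ℕ) + 1)) →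
      (∀ i : ℕ+, n < i → w i = i) →
      S w = ∏ i ∈ Finset.Icc (1 : ℕ+) n, X i ^ ((n : ℕ) - (i : ℕ)))
    (hdd : ∀ (w : Equiv.Perm ℕ+) (k : ℕ+), w (k + 1) < w k →
      S w - rename (Equiv.swap k (k + 1)) (S w) =
        (X k - X (k + 1)) * S (w * Equiv.swap k (k + 1)))
    (w : Equiv.Perm ℕ+) (n : ℕ+) (hw : ∀ i : ℕ+, n < i → w i = i) :
    S w = Rop 1 (S w) +
      ∑ k ∈ Finset.Icc (1 : ℕ+) n,
        if w (k + 1) < w k then X k * Rop (k + 1) (S (w * Equiv.swap k (k + 1)))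
        else 0 := by
  open SatisfiesDividedDifference in
  rw [sum_congr rfl fun k _ => ite_eq_Rop_sub hdd w k, PNat.sum_Icc_one_sub (Rop · (S w)),
    Rop_eq_self hdd hbase le_rfl hw]
  abel
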